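/- (Proposition 1: strong duality.) Let w ∈ ℝ^W and suppose there exists x ∈ ℝ^n with A_f x + B_f w + γ_f = 0 (so Slater's condition holds for FP'(w)). Then the optimal values of the primal and dual SOCPs coincide: fp'(w) = dp'(w), where fp'(w) is the infimum of 1ᵀz_s + 1ᵀz_q over FP'(w)-feasible points and dp'(w) is the supremum of D_w(μ, λ) over dual feasible points. -/

import Mathlib

/-!
Weak duality is the termwise estimate `λ t ≤ z` for the slack constraints together with
Cauchy–Schwarz for the cone constraints. For strong duality, the Lagrangian of these constraints
is, for each choice of multipliers, an affine function of `x`; as the multipliers range over their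
compact convex set, its coefficients form a compact convex set `K`. At every `x` with
`A_f x + B_f w + γ_f = 0`, tight multipliers make the Lagrangian equal to the optimal slack
`1ᵀz_s + 1ᵀz_q`, hence at least any lower bound `p` of the primal values. Separating `K` from
`{(a, β) | a ∈ range A_fᵀ, p ≤ ⟨a, x₀⟩ + β}`, where `x₀` is the Slater point, would produce a point
of that affine set where the whole family stays below `p`; so the two sets meet, and a common
point is a dual feasible point with objective value at least `p`.
-/

open Matrix

/-- Euclidean norm on `Fin k → ℝ`. -/
noncomputable def eucNorm {k : ℕ} (y : Fin k → ℝ) : ℝ := Real.sqrt (∑ i, (y i) ^ 2)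

/-- Euclidean inner product on `Fin k → ℝ`. -/
def dotp {k : ℕ} (a b : Fin k → ℝ) : ℝ := ∑ i, a i * b i

/-- The constant data of the SOCP `FP'(w)` (and of its dual `DP'(w)`). -/
structure SOCPData (n m s N W : ℕ) where
  Af : Matrix (Fin m) (Fin n) ℝ
  Bf : Matrix (Fin m) (Fin W) ℝ
  As : Matrix (Fin s) (Fin n) ℝ
  gf : Fin m → ℝ
  gs : Fin s → ℝ
  Ay : Fin N → Matrix (Fin 3) (Fin n) ℝ
  bY : Fin N → Fin 3 → ℝ
  cq : Fin N → Fin n → ℝ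
  gq : Fin N → ℝ

/-- Feasibility of `(x, y, z_s, z_q)` for the SOCP `FP'(w)`. -/
def FPfeas {n m s N W : ℕ} (d : SOCPData n m s N W) (w : Fin W → ℝ) (x : Fin n → ℝ)
    (y : Fin N → Fin 3 → ℝ) (zs : Fin s → ℝ) (zq : Fin N → ℝ) : Prop :=
  (∀ i, 0 ≤ zs i) ∧ (∀ j, 0 ≤ zq j) ∧
  d.Af.mulVec x + d.Bf.mulVec w + d.gf = 0 ∧
  (∀ i, d.As.mulVec x i + d.gs i ≤ zs i) ∧
  (∀ j, y j = (d.Ay j).mulVec x + d.bY j) ∧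
  (∀ j, eucNorm (y j) ≤ dotp (d.cq j) x + d.gq j + zq j)

/-- Dual feasibility of `(μ_f, μ_y, λ_s, λ_q)` for `DP'(w)`. -/
def DualFeas {n m s N W : ℕ} (d : SOCPData n m s N W) (muf : Fin m → ℝ)
    (muy : Fin N → Fin 3 → ℝ) (ls : Fin s → ℝ) (lq : Fin N → ℝ) : Prop :=
  (∀ i, 0 ≤ ls i ∧ ls i ≤ 1) ∧ (∀ j, 0 ≤ lq j ∧ lq j ≤ 1) ∧
  (d.Af.transpose.mulVec muf + d.As.transpose.mulVec ls
    = (∑ j, (d.Ay j).transpose.mulVec (muy j)) + ∑ j, lq j • d.cq j) ∧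
  (∀ j, eucNorm (muy j) ≤ lq j)

/-- The dual objective `D_w(μ, λ)`. -/
def Dobj {n m s N W : ℕ} (d : SOCPData n m s N W) (w : Fin W → ℝ) (muf : Fin m → ℝ)
    (muy : Fin N → Fin 3 → ℝ) (ls : Fin s → ℝ) (lq : Fin N → ℝ) : ℝ :=
  dotp muf (d.Bf.mulVec w + d.gf) + dotp ls d.gs
    - (∑ j, dotp (muy j) (d.bY j)) - ∑ j, lq j * d.gq j

/-- `fp'(w)`: the optimal (infimum) value of the primal SOCP `FP'(w)`, in `EReal`. -/
noncomputable def fpVal {n m s N W : ℕ} (d : SOCPData n m s N W) (w : Fin W → ℝ) : EReal :=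
  sInf {v : EReal | ∃ x y zs zq, FPfeas d w x y zs zq ∧
    v = (((∑ i, zs i) + ∑ j, zq j : ℝ) : EReal)}

/-- `dp'(w)`: the optimal (supremum) value of the dual SOCP `DP'(w)`, in `EReal`. -/
noncomputable def dpVal {n m s N W : ℕ} (d : SOCPData n m s N W) (w : Fin W → ℝ) : EReal :=
  sSup {v : EReal | ∃ muf muy ls lq, DualFeas d muf muy ls lq ∧
    v = ((Dobj d w muf muy ls lq : ℝ) : EReal)}

section Separation

variable {ι : Type*} [Fintype ι]

lemma LinearMap.exists_eq_dotProduct_add_mul (f : (ι → ℝ) × ℝ →ₗ[ℝ] ℝ) :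
    ∃ (w : ι → ℝ) (t : ℝ), ∀ q, f q = q.1 ⬝ᵥ w + q.2 * t := by
  classical
  refine ⟨fun i => f (fun j => if i = j then 1 else 0, 0), f (0, 1), fun q => ?_⟩
  calc f q = (f ∘ₗ LinearMap.inl ℝ _ ℝ) q.1 + q.2 * f (0, 1) := by
        rw [← smul_eq_mul, ← map_smul, LinearMap.comp_apply, LinearMap.inl_apply, ← map_add]
        simp
    _ = _ := by simp [LinearMap.pi_apply_eq_sum_univ _ q.1, dotProduct]

lemma eq_zero_of_forall_lt_mul_add {x y v : ℝ} (h : ∀ c : ℝ, v < c * x + y) : x = 0 := by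
  by_contra hx
  have := h ((v - y) / x)
  rw [div_mul_cancel₀ _ hx] at this
  linarith

/-- A minimax principle for a compact convex family `K` of affine functions `x ↦ k.1 ⬝ᵥ x + k.2`
on the affine subspace through `x₀` orthogonal to `S`. -/
theorem exists_mem_submodule_of_forall_exists_le {K : Set ((ι → ℝ) × ℝ)}
    (hKconv : Convex ℝ K) (hKcomp : IsCompact K) (S : Submodule ℝ (ι → ℝ)) (x₀ : ι → ℝ) {p : ℝ}
    (h : ∀ x, (∀ a ∈ S, a ⬝ᵥ x = a ⬝ᵥ x₀) → ∃ k ∈ K, p ≤ k.1 ⬝ᵥ x + k.2) :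
    ∃ k ∈ K, k.1 ∈ S ∧ p ≤ k.1 ⬝ᵥ x₀ + k.2 := by
  by_contra! hK
  set Q : Set ((ι → ℝ) × ℝ) := {q | q.1 ∈ S ∧ p ≤ q.1 ⬝ᵥ x₀ + q.2}
  have hQconv : Convex ℝ Q := by
    rintro q₁ ⟨hS₁, hp₁⟩ q₂ ⟨hS₂, hp₂⟩ a b ha hb hab
    refine ⟨S.add_mem (S.smul_mem a hS₁) (S.smul_mem b hS₂), ?_⟩
    simp only [Prod.fst_add, Prod.snd_add, Prod.smul_fst, Prod.smul_snd, add_dotProduct,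
      smul_dotProduct, smul_eq_mul]
    have hp : a * p + b * p = p := by rw [← add_mul, hab, one_mul]
    nlinarith [mul_le_mul_of_nonneg_left hp₁ ha, mul_le_mul_of_nonneg_left hp₂ hb]
  have hQclosed : IsClosed Q :=
    (S.closed_of_finiteDimensional.preimage continuous_fst).inter
      (isClosed_le continuous_const
        ((continuous_fst.dotProduct continuous_const).add continuous_snd))
  have hKQ : Disjoint K Q :=
    Set.disjoint_left.mpr fun k hk hkQ => (hK k hk hkQ.1).not_ge hkQ.2
  obtain ⟨f, u, v, hfK, huv, hfQ⟩ :=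
    geometric_hahn_banach_compact_closed hKconv hKcomp hQconv hQclosed hKQ
  obtain ⟨w, t, hf⟩ := (f : (ι → ℝ) × ℝ →ₗ[ℝ] ℝ).exists_eq_dotProduct_add_mul
  simp only [ContinuousLinearMap.coe_coe] at hf
  have hfQ' : ∀ a ∈ S, ∀ r, 0 ≤ r → v < a ⬝ᵥ w - t * (a ⬝ᵥ x₀) + (p + r) * t := by
    intro a ha r hr
    have := hfQ (a, p + r - a ⬝ᵥ x₀) ⟨ha, by simpa using hr⟩
    rw [hf] at this
    linarith
  have hS : ∀ a ∈ S, a ⬝ᵥ w = t * (a ⬝ᵥ x₀) := by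
    intro a ha
    have hc : ∀ c : ℝ, v < c * (a ⬝ᵥ w - t * (a ⬝ᵥ x₀)) + p * t := fun c => by
      have := hfQ' (c • a) (S.smul_mem c ha) 0 le_rfl
      simp only [smul_dotProduct, smul_eq_mul] at this
      linarith
    linarith [eq_zero_of_forall_lt_mul_add hc]
  have hray : ∀ r, 0 ≤ r → v < (p + r) * t := by simpa using hfQ' 0 S.zero_mem
  have hv : v < p * t := by simpa using hray 0 le_rfl
  have ht : 0 ≤ t := by
    by_contra! ht
    have hle : (p + |v / t - p|) * t ≤ v :=
      calc (p + |v / t - p|) * t ≤ v / t * t :=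
            mul_le_mul_of_nonpos_right (by linarith [le_abs_self (v / t - p)]) ht.le
        _ = v := div_mul_cancel₀ _ ht.ne
    linarith [hray _ (abs_nonneg (v / t - p))]
  have hfK' : ∀ k ∈ K, k.1 ⬝ᵥ w + k.2 * t < u := fun k hk => by
    simpa [hf] using hfK k hk
  -- `t⁻¹ • w` if `t > 0`, or `x₀ + σ • w` for large `σ` if `t = 0`, lies on the affine set
  -- and every function of `K` is `< p` there.
  rcases ht.lt_or_eq with ht | rfl
  · obtain ⟨k, hk, hpk⟩ := h (t⁻¹ • w) fun a ha => by
      rw [dotProduct_smul, hS a ha, smul_eq_mul, inv_mul_cancel_left₀ ht.ne']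
    have hlt : t⁻¹ * (k.1 ⬝ᵥ w) < p - k.2 :=
      (inv_mul_lt_iff₀ ht).mpr (by linarith [hfK' k hk])
    rw [dotProduct_smul, smul_eq_mul] at hpk
    linarith
  · obtain ⟨B, hB⟩ := hKcomp.bddAbove_image (f := fun k => k.1 ⬝ᵥ x₀ + k.2)
      ((continuous_fst.dotProduct continuous_const).add continuous_snd).continuousOn
    set σ := |B - p + 1| / -u
    have hu : u < 0 := by linarith
    have hσ : 0 ≤ σ := div_nonneg (abs_nonneg _) (by linarith)
    have hσu : σ * u = -|B - p + 1| := by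
      rw [div_mul_eq_mul_div, div_neg, mul_div_assoc, div_self hu.ne, mul_one]
    obtain ⟨k, hk, hpk⟩ := h (x₀ + σ • w) fun a ha => by
      rw [dotProduct_add, dotProduct_smul, hS a ha, zero_mul, smul_zero, add_zero]
    have hkB : k.1 ⬝ᵥ x₀ + k.2 ≤ B := hB ⟨k, hk, rfl⟩
    have hkw : σ * (k.1 ⬝ᵥ w) ≤ σ * u :=
      mul_le_mul_of_nonneg_left (by simpa using (hfK' k hk).le) hσ
    rw [dotProduct_add, dotProduct_smul, smul_eq_mul] at hpk
    linarith [le_abs_self (B - p + 1)]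

end Separation

section LorentzCone

variable {E : Type*} [NormedAddCommGroup E]

variable (E) in
def truncLorentzCone : Set (E × ℝ) := {q | ‖q.1‖ ≤ q.2 ∧ q.2 ≤ 1}

lemma convex_truncLorentzCone [NormedSpace ℝ E] : Convex ℝ (truncLorentzCone E) := by
  convert (convexOn_norm convex_univ).convex_epigraph.inter
    (convex_halfSpace_le (LinearMap.snd ℝ E ℝ).isLinear 1) using 1
  ext; simp [truncLorentzCone]

lemma isCompact_truncLorentzCone [NormedSpace ℝ E] [FiniteDimensional ℝ E] :
    IsCompact (truncLorentzCone E) := by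
  refine Metric.isCompact_of_isClosed_isBounded
    ((isClosed_le (continuous_norm.comp continuous_fst) continuous_snd).inter
      (isClosed_le continuous_snd continuous_const))
    (Metric.isBounded_closedBall (x := 0) (r := 1) |>.subset fun q hq => ?_)
  have := norm_nonneg q.1
  simp only [Metric.mem_closedBall, dist_zero_right, Prod.norm_def, Real.norm_eq_abs]
  exact max_le (hq.1.trans hq.2) (abs_le.mpr ⟨by linarith [hq.1], hq.2⟩)

variable [InnerProductSpace ℝ E]

lemma neg_inner_add_mul_le_of_mem_truncLorentzCone {q : E × ℝ} (hq : q ∈ truncLorentzCone E)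
    {y : E} {c z : ℝ} (hy : ‖y‖ ≤ c + z) (hz : 0 ≤ z) : -(inner ℝ q.1 y + q.2 * c) ≤ z := by
  obtain ⟨hq₁, hq₂⟩ := hq
  have hq₀ : 0 ≤ q.2 := (norm_nonneg _).trans hq₁
  have := neg_le_of_abs_le (abs_real_inner_le_norm q.1 y)
  nlinarith [mul_le_mul_of_nonneg_right hq₁ (norm_nonneg y), mul_le_mul_of_nonneg_left hy hq₀]

lemma exists_mem_truncLorentzCone_neg_inner_add_mul_eq (y : E) (c : ℝ) :
    ∃ q ∈ truncLorentzCone E, -(inner ℝ q.1 y + q.2 * c) = max (‖y‖ - c) 0 := by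
  by_cases hc : c < ‖y‖
  · refine ⟨(-‖y‖⁻¹ • y, 1), ⟨?_, le_rfl⟩, ?_⟩
    · rw [norm_smul, norm_neg, norm_inv, norm_norm]
      exact inv_mul_le_one
    · rw [inner_smul_left, real_inner_self_eq_norm_sq, max_eq_left (by linarith)]
      simp only [RCLike.conj_to_real]
      linear_combination mul_self_mul_inv ‖y‖
  · exact ⟨0, ⟨by simp, by simp⟩, by simp [max_eq_right (not_lt.mp hc |> sub_nonpos.mpr)]⟩

end LorentzCone

lemma exists_mem_Icc_mul_eq_max (t : ℝ) : ∃ l ∈ Set.Icc (0 : ℝ) 1, l * t = max t 0 := by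
  rcases le_total 0 t with ht | ht
  · exact ⟨1, ⟨zero_le_one, le_rfl⟩, by simp [ht]⟩
  · exact ⟨0, ⟨le_rfl, zero_le_one⟩, by simp [ht]⟩

lemma Matrix.mulVec_eq_of_forall_mem_range_transpose {R ι κ : Type*} [CommSemiring R]
    [Fintype ι] [Fintype κ] {A : Matrix κ ι R} {x x₀ : ι → R}
    (h : ∀ a ∈ LinearMap.range Aᵀ.mulVecLin, a ⬝ᵥ x = a ⬝ᵥ x₀) : A *ᵥ x = A *ᵥ x₀ := by
  refine dotProduct_eq _ _ fun μ => ?_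
  have := h (Aᵀ *ᵥ μ) ⟨μ, rfl⟩
  rwa [mulVec_transpose, ← dotProduct_mulVec, ← dotProduct_mulVec, dotProduct_comm μ,
    dotProduct_comm μ] at this

lemma dotp_eq_dotProduct {k : ℕ} (a b : Fin k → ℝ) : dotp a b = a ⬝ᵥ b := rfl

lemma eucNorm_eq_norm {k : ℕ} (y : Fin k → ℝ) : eucNorm y = ‖WithLp.toLp 2 y‖ := by
  simp [eucNorm, EuclideanSpace.norm_eq, sq_abs]

open WithLp

namespace SOCPData

variable {n m s N W : ℕ} (d : SOCPData n m s N W)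

-- Multipliers `(λ_s, (μ_y^j, λ_q^j)_j)` of the slack and second-order cone constraints.
abbrev DualSlack (s N : ℕ) := (Fin s → ℝ) × (Fin N → EuclideanSpace ℝ (Fin 3) × ℝ)

def dualSlackSet (s N : ℕ) : Set (DualSlack s N) :=
  Set.Icc 0 1 ×ˢ Set.univ.pi fun _ => truncLorentzCone _

lemma convex_dualSlackSet : Convex ℝ (dualSlackSet s N) :=
  (convex_Icc 0 1).prod (convex_pi fun _ _ => convex_truncLorentzCone)

lemma isCompact_dualSlackSet : IsCompact (dualSlackSet s N) :=
  isCompact_Icc.prod (isCompact_univ_pi fun _ => isCompact_truncLorentzCone)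

noncomputable def lagrangianCoeffs : DualSlack s N →ₗ[ℝ] (Fin n → ℝ) × ℝ where
  toFun e := (d.Asᵀ *ᵥ e.1 - ∑ j, ((d.Ay j)ᵀ *ᵥ ofLp (e.2 j).1 + (e.2 j).2 • d.cq j),
    e.1 ⬝ᵥ d.gs - ∑ j, (ofLp (e.2 j).1 ⬝ᵥ d.bY j + (e.2 j).2 * d.gq j))
  map_add' e e' := by
    ext <;> simp [mulVec_add, add_smul, Finset.sum_add_distrib, add_mul] <;> abel
  map_smul' c e := by
    ext <;> simp [mulVec_smul, mul_smul, Finset.mul_sum, mul_add, mul_sub, mul_assoc]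

lemma lagrangianCoeffs_dotProduct_add (e : DualSlack s N) (x : Fin n → ℝ) :
    (d.lagrangianCoeffs e).1 ⬝ᵥ x + (d.lagrangianCoeffs e).2 =
      e.1 ⬝ᵥ (d.As *ᵥ x + d.gs) - ∑ j, (inner ℝ (e.2 j).1 (toLp 2 (d.Ay j *ᵥ x + d.bY j))
        + (e.2 j).2 * (d.cq j ⬝ᵥ x + d.gq j)) := by
  simp [lagrangianCoeffs, EuclideanSpace.inner_eq_star_dotProduct, sub_dotProduct,
    sum_dotProduct, add_dotProduct, mulVec_transpose, dotProduct_mulVec, dotProduct_add,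
    Finset.sum_add_distrib, mul_add, dotProduct_comm (d.Ay _ *ᵥ x), dotProduct_comm (d.bY _)]
  ring

variable {w : Fin W → ℝ} {x : Fin n → ℝ} {e : DualSlack s N}

lemma lagrangian_le_of_FPfeas {y : Fin N → Fin 3 → ℝ} {zs : Fin s → ℝ} {zq : Fin N → ℝ}
    (hP : FPfeas d w x y zs zq) (he : e ∈ dualSlackSet s N) :
    (d.lagrangianCoeffs e).1 ⬝ᵥ x + (d.lagrangianCoeffs e).2 ≤ ∑ i, zs i + ∑ j, zq j := by
  obtain ⟨hzs, hzq, -, hAs, hy, hsoc⟩ := hP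
  rw [lagrangianCoeffs_dotProduct_add, sub_eq_add_neg, ← Finset.sum_neg_distrib]
  refine add_le_add (Finset.sum_le_sum fun i _ => ?_) (Finset.sum_le_sum fun j _ => ?_)
  · have hl : e.1 i ∈ Set.Icc (0 : ℝ) 1 := ⟨he.1.1 i, he.1.2 i⟩
    calc e.1 i * (d.As *ᵥ x + d.gs) i ≤ e.1 i * zs i := mul_le_mul_of_nonneg_left (hAs i) hl.1
      _ ≤ zs i := mul_le_of_le_one_left (hzs i) hl.2
  · refine neg_inner_add_mul_le_of_mem_truncLorentzCone (he.2 j trivial) ?_ (hzq j)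
    rw [← hy, ← eucNorm_eq_norm]
    simpa [dotp_eq_dotProduct, add_assoc] using hsoc j

lemma exists_FPfeas_lagrangian_eq (hx : d.Af *ᵥ x + d.Bf *ᵥ w + d.gf = 0) :
    ∃ y zs zq, FPfeas d w x y zs zq ∧ ∃ e ∈ dualSlackSet s N,
      (d.lagrangianCoeffs e).1 ⬝ᵥ x + (d.lagrangianCoeffs e).2 = ∑ i, zs i + ∑ j, zq j := by
  set y : Fin N → Fin 3 → ℝ := fun j => d.Ay j *ᵥ x + d.bY j
  choose ls hls hls_eq using fun i => exists_mem_Icc_mul_eq_max ((d.As *ᵥ x + d.gs) i)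
  choose q hq hq_eq using fun j =>
    exists_mem_truncLorentzCone_neg_inner_add_mul_eq (toLp 2 (y j)) (d.cq j ⬝ᵥ x + d.gq j)
  refine ⟨y, fun i => max ((d.As *ᵥ x + d.gs) i) 0,
    fun j => max (eucNorm (y j) - (d.cq j ⬝ᵥ x + d.gq j)) 0,
    ⟨fun i => le_max_right _ _, fun j => le_max_right _ _, hx, fun i => le_max_left _ _,
      fun j => rfl, fun j => ?_⟩, (ls, q), ⟨⟨fun i => (hls i).1, fun i => (hls i).2⟩,
      fun j _ => hq j⟩, ?_⟩
  · rw [dotp_eq_dotProduct]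
    linarith [le_max_left (eucNorm (y j) - (d.cq j ⬝ᵥ x + d.gq j)) 0]
  · rw [lagrangianCoeffs_dotProduct_add, sub_eq_add_neg, ← Finset.sum_neg_distrib, dotProduct]
    exact congr_arg₂ (· + ·) (Finset.sum_congr rfl fun i _ => hls_eq i)
      (Finset.sum_congr rfl fun j _ => by rw [hq_eq j, ← eucNorm_eq_norm])

lemma dualFeas_iff (muf : Fin m → ℝ) :
    DualFeas d muf (fun j => ofLp (e.2 j).1) e.1 (fun j => (e.2 j).2) ↔
      e ∈ dualSlackSet s N ∧ d.Afᵀ *ᵥ muf + (d.lagrangianCoeffs e).1 = 0 := by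
  have hstat : d.Afᵀ *ᵥ muf + d.Asᵀ *ᵥ e.1 =
      (∑ j, (d.Ay j)ᵀ *ᵥ ofLp (e.2 j).1) + ∑ j, (e.2 j).2 • d.cq j ↔
        d.Afᵀ *ᵥ muf + (d.lagrangianCoeffs e).1 = 0 := by
    simp [lagrangianCoeffs, Finset.sum_add_distrib, ← add_sub_assoc, sub_eq_zero]
  have hnorm : ∀ j, eucNorm (ofLp (e.2 j).1) = ‖(e.2 j).1‖ := fun j => by
    simp [eucNorm_eq_norm]
  constructor
  · rintro ⟨hls, hlq, hst, hmu⟩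
    exact ⟨⟨⟨fun i => (hls i).1, fun i => (hls i).2⟩, fun j _ => ⟨hnorm j ▸ hmu j, (hlq j).2⟩⟩,
      hstat.mp hst⟩
  · rintro ⟨⟨⟨h0, h1⟩, hq⟩, hst⟩
    exact ⟨fun i => ⟨h0 i, h1 i⟩,
      fun j => ⟨(norm_nonneg _).trans (hq j trivial).1, (hq j trivial).2⟩, hstat.mpr hst,
      fun j => (hnorm j).trans_le (hq j trivial).1⟩

lemma Dobj_eq_lagrangian {muf : Fin m → ℝ} (hx : d.Af *ᵥ x + d.Bf *ᵥ w + d.gf = 0)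
    (hstat : d.Afᵀ *ᵥ muf + (d.lagrangianCoeffs e).1 = 0) :
    Dobj d w muf (fun j => ofLp (e.2 j).1) e.1 (fun j => (e.2 j).2) =
      (d.lagrangianCoeffs e).1 ⬝ᵥ x + (d.lagrangianCoeffs e).2 := by
  have hg : d.Bf *ᵥ w + d.gf = -(d.Af *ᵥ x) := by
    rw [add_assoc] at hx
    exact eq_neg_of_add_eq_zero_right hx
  rw [eq_neg_of_add_eq_zero_right hstat, neg_dotProduct, mulVec_transpose, ← dotProduct_mulVec]
  simp [Dobj, dotp_eq_dotProduct, hg, lagrangianCoeffs, Finset.sum_add_distrib]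
  ring

theorem Dobj_le_of_FPfeas {x : Fin n → ℝ} {y : Fin N → Fin 3 → ℝ} {zs : Fin s → ℝ}
    {zq : Fin N → ℝ} {muf : Fin m → ℝ} {muy : Fin N → Fin 3 → ℝ} {ls : Fin s → ℝ}
    {lq : Fin N → ℝ} (hP : FPfeas d w x y zs zq) (hD : DualFeas d muf muy ls lq) :
    Dobj d w muf muy ls lq ≤ ∑ i, zs i + ∑ j, zq j := by
  obtain ⟨he, hstat⟩ := (d.dualFeas_iff (e := (ls, fun j => (toLp 2 (muy j), lq j))) muf).mp hD
  exact (d.Dobj_eq_lagrangian hP.2.2.1 hstat).trans_le (d.lagrangian_le_of_FPfeas hP he)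

theorem dpVal_le_fpVal : dpVal d w ≤ fpVal d w := by
  refine sSup_le ?_
  rintro _ ⟨muf, muy, ls, lq, hD, rfl⟩
  refine le_sInf ?_
  rintro _ ⟨x, y, zs, zq, hP, rfl⟩
  exact EReal.coe_le_coe_iff.mpr (d.Dobj_le_of_FPfeas hP hD)

theorem exists_dualFeas_le_Dobj {x₀ : Fin n → ℝ} (hx₀ : d.Af *ᵥ x₀ + d.Bf *ᵥ w + d.gf = 0)
    {p : ℝ} (hp : ∀ x y zs zq, FPfeas d w x y zs zq → p ≤ ∑ i, zs i + ∑ j, zq j) :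
    ∃ muf muy ls lq, DualFeas d muf muy ls lq ∧ p ≤ Dobj d w muf muy ls lq := by
  have hfeas : ∀ x, (∀ a ∈ LinearMap.range d.Afᵀ.mulVecLin, a ⬝ᵥ x = a ⬝ᵥ x₀) →
      ∃ k ∈ d.lagrangianCoeffs '' dualSlackSet s N, p ≤ k.1 ⬝ᵥ x + k.2 := fun x hx => by
    have hx' : d.Af *ᵥ x + d.Bf *ᵥ w + d.gf = 0 := by
      rwa [mulVec_eq_of_forall_mem_range_transpose hx]
    obtain ⟨y, zs, zq, hP, e, he, heq⟩ := d.exists_FPfeas_lagrangian_eq hx'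
    exact ⟨_, ⟨e, he, rfl⟩, heq ▸ hp x y zs zq hP⟩
  obtain ⟨_, ⟨e, he, rfl⟩, ⟨μ, hμ⟩, hpe⟩ := exists_mem_submodule_of_forall_exists_le
    (convex_dualSlackSet.linear_image d.lagrangianCoeffs)
    (isCompact_dualSlackSet.image d.lagrangianCoeffs.continuous_of_finiteDimensional) _ x₀ hfeas
  have hstat : d.Afᵀ *ᵥ (-μ) + (d.lagrangianCoeffs e).1 = 0 := by
    rw [mulVec_neg, ← hμ, mulVecLin_apply, neg_add_cancel]
  exact ⟨-μ, _, _, _, (d.dualFeas_iff _).mpr ⟨he, hstat⟩,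
    hpe.trans_eq (d.Dobj_eq_lagrangian hx₀ hstat).symm⟩

end SOCPData

theorem stmt_4_general {n m s N W : ℕ} (d : SOCPData n m s N W) (w : Fin W → ℝ)
    (hx : ∃ x : Fin n → ℝ, d.Af.mulVec x + d.Bf.mulVec w + d.gf = 0) :
    fpVal d w = dpVal d w := by
  obtain ⟨x₀, hx₀⟩ := hx
  refine le_antisymm (not_lt.mp fun hlt => ?_) d.dpVal_le_fpVal
  obtain ⟨r, hdr, hrf⟩ := EReal.lt_iff_exists_real_btwn.mp hlt
  obtain ⟨muf, muy, ls, lq, hD, hr⟩ := d.exists_dualFeas_le_Dobj hx₀ fun x y zs zq hP =>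
    EReal.coe_le_coe_iff.mp (hrf.le.trans (sInf_le ⟨x, y, zs, zq, hP, rfl⟩))
  have hdual : ((Dobj d w muf muy ls lq : ℝ) : EReal) ≤ dpVal d w :=
    le_sSup ⟨muf, muy, ls, lq, hD, rfl⟩
  exact (hdual.trans_lt hdr).not_ge (EReal.coe_le_coe_iff.mpr hr)

/-- Proposition 1 (strong duality): if Slater's condition holds for `FP'(w)`
(the affine power-flow equations are solvable), then `fp'(w) = dp'(w)`. -/
theorem stmt_4 {n m s N W : ℕ} (hn : 0 < n) (hm : 0 < m) (hs : 0 < s) (hN : 0 < N)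
    (hW : 0 < W) (d : SOCPData n m s N W) (w : Fin W → ℝ)
    (hx : ∃ x : Fin n → ℝ, d.Af.mulVec x + d.Bf.mulVec w + d.gf = 0) :
    fpVal d w = dpVal d w :=
  stmt_4_general d w hx
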